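/- arXiv:math/0403123 — 5 statements merged into one kernel-verified Lean document; each statement's English description precedes it below -/
import Mathlib

section
/- ψ-additivity of ψ-Pascal matrices: for all x, y ∈ K and all 0 ≤ j ≤ i ≤ n−1, the (i,j)-entry of the matrix product P_ψ[x]·P_ψ[y] equals C_ψ(i,j)·Σ_{m=0}^{i−j} C_ψ(i−j,m)·x^{i−j−m}·y^{m} (and the entries with j > i are 0); in other words P_ψ[x]·P_ψ[y] = P_ψ[x +_ψ y], where P_ψ[x +_ψ y] denotes the lower-triangular matrix with (i,j)-entry C_ψ(i,j)·(x +_ψ y)^{i−j}. -/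
/-- The ψ-binomial coefficient `C_ψ(n,k) = φ(n)/(φ(k)·φ(n−k))`. -/
noncomputable def psiBinom {K : Type*} [Field K] (φ : ℕ → K) (n k : ℕ) : K :=
  φ n / (φ k * φ (n - k))

/-- The `n×n` ψ-Pascal matrix `P_ψ[x]`, lower triangular with entries
`x^{i−j}·C_ψ(i,j)` for `j ≤ i` and `0` otherwise. -/
noncomputable def psiPascal {K : Type*} [Field K] (φ : ℕ → K) (n : ℕ) (x : K) :
    Matrix (Fin n) (Fin n) K :=
  Matrix.of fun i j =>
    if (j : ℕ) ≤ (i : ℕ) then x ^ ((i : ℕ) - (j : ℕ)) * psiBinom φ i j else 0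

/-- ψ-additivity of ψ-Pascal matrices: `P_ψ[x]·P_ψ[y] = P_ψ[x +_ψ y]`, where
the `(i,j)` entry of `P_ψ[x +_ψ y]` is `C_ψ(i,j)·(x +_ψ y)^{i−j}` for `j ≤ i`
(and `0` otherwise), and `(x +_ψ y)^N = Σ_{m=0}^{N} C_ψ(N,m)·x^{N−m}·y^{m}`. -/
theorem psiPascal_mul {K : Type*} [Field K] [CharZero K]
    (φ : ℕ → K) (h0 : φ 0 = 1) (hφ : ∀ n, φ n ≠ 0) (n : ℕ) :
    ∀ x y : K,
      psiPascal φ n x * psiPascal φ n y =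
        Matrix.of fun i j : Fin n =>
          if (j : ℕ) ≤ (i : ℕ) then
            psiBinom φ i j *
              ∑ m ∈ Finset.range ((i : ℕ) - (j : ℕ) + 1),
                psiBinom φ ((i : ℕ) - (j : ℕ)) m *
                  x ^ ((i : ℕ) - (j : ℕ) - m) * y ^ m
          else 0 := by
  intro x y
  ext i j
  simp only [Matrix.mul_apply, psiPascal, Matrix.of_apply]
  by_cases hij : (j : ℕ) ≤ (i : ℕ)
  · rw [if_pos hij]
    -- turn the Fin sum into a ℕ-range sum
    have hfin : (∑ k : Fin n,
        (if (k : ℕ) ≤ (i : ℕ) then x ^ ((i : ℕ) - (k : ℕ)) * psiBinom φ i k else 0) *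
        (if (j : ℕ) ≤ (k : ℕ) then y ^ ((k : ℕ) - (j : ℕ)) * psiBinom φ k j else 0)) =
        ∑ k ∈ Finset.range n,
        (if k ≤ (i : ℕ) then x ^ ((i : ℕ) - k) * psiBinom φ i k else 0) *
        (if (j : ℕ) ≤ k then y ^ (k - (j : ℕ)) * psiBinom φ k j else 0) := by
      rw [Finset.sum_range fun k =>
        (if k ≤ (i : ℕ) then x ^ ((i : ℕ) - k) * psiBinom φ i k else 0) *
        (if (j : ℕ) ≤ k then y ^ (k - (j : ℕ)) * psiBinom φ k j else 0)]
    rw [hfin]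
    have hsub : Finset.Icc (j : ℕ) (i : ℕ) ⊆ Finset.range n := by
      intro k hk
      simp only [Finset.mem_Icc] at hk
      exact Finset.mem_range.mpr (lt_of_le_of_lt hk.2 i.isLt)
    rw [← Finset.sum_subset hsub (by
      intro k _ hk
      simp only [Finset.mem_Icc, not_and_or, not_le] at hk
      rcases hk with h | h
      · rw [if_neg (show ¬((j : ℕ) ≤ k) by omega), mul_zero]
      · rw [if_neg (show ¬(k ≤ (i : ℕ)) by omega), zero_mul])]
    rw [← Finset.Ico_add_one_right_eq_Icc, Finset.sum_Ico_eq_sum_range]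
    have hcount : (i : ℕ) + 1 - (j : ℕ) = (i : ℕ) - (j : ℕ) + 1 := by omega
    rw [hcount, Finset.mul_sum]
    refine Finset.sum_congr rfl ?_
    intro m hm
    rw [Finset.mem_range] at hm
    have hm' : m ≤ (i : ℕ) - (j : ℕ) := by omega
    rw [if_pos (by omega : (j : ℕ) + m ≤ (i : ℕ)), if_pos (by omega : (j : ℕ) ≤ (j : ℕ) + m)]
    have e1 : (i : ℕ) - ((j : ℕ) + m) = (i : ℕ) - (j : ℕ) - m := by omega
    have e2 : (j : ℕ) + m - (j : ℕ) = m := by omega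
    rw [e1, e2]
    have hkey : psiBinom φ (i : ℕ) ((j : ℕ) + m) * psiBinom φ ((j : ℕ) + m) (j : ℕ) =
        psiBinom φ (i : ℕ) (j : ℕ) * psiBinom φ ((i : ℕ) - (j : ℕ)) m := by
      unfold psiBinom
      have e4 : (i : ℕ) - (j : ℕ) - m = (i : ℕ) - ((j : ℕ) + m) := by omega
      rw [e2, e4]
      rw [div_mul_div_comm, div_mul_div_comm, div_eq_div_iff
        (by simp [hφ, mul_ne_zero]) (by simp [hφ, mul_ne_zero])]
      ring
    linear_combination (x ^ ((i : ℕ) - (j : ℕ) - m) * y ^ m) * hkey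
  · rw [if_neg hij]
    apply Finset.sum_eq_zero
    intro k _
    by_cases hk : (k : ℕ) ≤ (i : ℕ)
    · rw [if_neg (show ¬((j : ℕ) ≤ (k : ℕ)) by omega), mul_zero]
    · rw [if_neg hk, zero_mul]
end

section
/- The family {P_ψ[x]}_{x ∈ K} is abelian: for all x, y ∈ K one has P_ψ[x]·P_ψ[y] = P_ψ[y]·P_ψ[x] as n×n matrices. -/
open Finset

section

variable {K : Type*} [Field K] (φ : ℕ → K)

theorem psiBinom_sub {n k : ℕ} (hk : k ≤ n) : psiBinom φ n (n - k) = psiBinom φ n k := by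
  rw [psiBinom, psiBinom, Nat.sub_sub_self hk, mul_comm (φ k)]

theorem psiBinom_mul_psiBinom (hφ : ∀ n, φ n ≠ 0) {i j k : ℕ} (hjk : j ≤ k) (hki : k ≤ i) :
    psiBinom φ i k * psiBinom φ k j = psiBinom φ i j * psiBinom φ (i - j) (k - j) := by
  have hsub : i - j - (k - j) = i - k := by omega
  simp only [psiBinom, hsub]
  field_simp [hφ]

/-- The ψ-binomial power `(x +_ψ y)^d`. -/
noncomputable def psiAddPow (x y : K) (d : ℕ) : K :=
  ∑ m ∈ range (d + 1), x ^ (d - m) * y ^ m * psiBinom φ d m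

theorem psiAddPow_comm (x y : K) (d : ℕ) : psiAddPow φ x y d = psiAddPow φ y x d := by
  rw [psiAddPow, ← sum_range_reflect]
  refine sum_congr rfl fun m hm => ?_
  have hmd : m ≤ d := Nat.lt_succ_iff.mp (mem_range.mp hm)
  rw [Nat.add_sub_cancel, Nat.sub_sub_self hmd, psiBinom_sub φ hmd, mul_comm (x ^ m)]

theorem psiPascal_mul_apply (hφ : ∀ n, φ n ≠ 0) (n : ℕ) (x y : K) (i j : Fin n) :
    (psiPascal φ n x * psiPascal φ n y) i j =
      if (j : ℕ) ≤ i then psiBinom φ i j * psiAddPow φ x y (i - j) else 0 := by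
  set f : ℕ → K := fun k => (if k ≤ (i : ℕ) then x ^ ((i : ℕ) - k) * psiBinom φ i k else 0) *
      (if (j : ℕ) ≤ k then y ^ (k - j) * psiBinom φ k j else 0)
  have hsum : (psiPascal φ n x * psiPascal φ n y) i j = ∑ k ∈ range n, f k := by
    simp only [Matrix.mul_apply, psiPascal, Matrix.of_apply]
    exact Fin.sum_univ_eq_sum_range f n
  have hf_zero : ∀ k, ¬ ((j : ℕ) ≤ k ∧ k ≤ i) → f k = 0 := by
    intro k hk
    by_cases hki : k ≤ (i : ℕ)
    · simp [f, show ¬ (j : ℕ) ≤ k by omega]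
    · simp [f, hki]
  rw [hsum]
  split_ifs with hji
  · have hsupp : ∑ k ∈ Ico (j : ℕ) (i + 1), f k = ∑ k ∈ range n, f k :=
      sum_subset (fun k hk => by simp only [mem_Ico, mem_range] at hk ⊢; omega)
        fun k _ hk => hf_zero k (by simpa [Nat.lt_succ_iff] using hk)
    rw [← hsupp, sum_Ico_eq_sum_range, show (i : ℕ) + 1 - j = i - j + 1 by omega, psiAddPow,
      mul_sum]
    refine sum_congr rfl fun m hmem => ?_
    have hm : m ≤ i - j := Nat.lt_succ_iff.mp (mem_range.mp hmem)
    simp only [f, if_pos (show (j : ℕ) + m ≤ i by omega), if_pos (Nat.le_add_right _ _),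
      Nat.add_sub_cancel_left]
    rw [show (i : ℕ) - (j + m) = i - j - m by omega]
    have hbinom := psiBinom_mul_psiBinom φ hφ (Nat.le_add_right (j : ℕ) m)
      (show (j : ℕ) + m ≤ i by omega)
    rw [Nat.add_sub_cancel_left] at hbinom
    linear_combination x ^ ((i : ℕ) - j - m) * y ^ m * hbinom
  · exact sum_eq_zero fun k _ => hf_zero k (by omega)

end

theorem psiPascal_mul_comm_general {K : Type*} [Field K]
    (φ : ℕ → K) (hφ : ∀ n, φ n ≠ 0) (n : ℕ) :
    ∀ x y : K, psiPascal φ n x * psiPascal φ n y = psiPascal φ n y * psiPascal φ n x := by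
  intro x y
  ext i j
  rw [psiPascal_mul_apply φ hφ, psiPascal_mul_apply φ hφ, psiAddPow_comm]

/-- The family `{P_ψ[x]}_{x ∈ K}` is abelian:
`P_ψ[x]·P_ψ[y] = P_ψ[y]·P_ψ[x]` for all `x, y ∈ K`. -/
theorem psiPascal_mul_comm {K : Type*} [Field K] [CharZero K]
    (φ : ℕ → K) (h0 : φ 0 = 1) (hφ : ∀ n, φ n ≠ 0) (n : ℕ) :
    ∀ x y : K, psiPascal φ n x * psiPascal φ n y = psiPascal φ n y * psiPascal φ n x :=
  psiPascal_mul_comm_general φ hφ n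
end

section
/- ψ-exponential formula for the ψ-Pascal matrix: for every x ∈ K, Σ_{k=0}^{n−1} (x^k/φ(k))·K_ψ^k = P_ψ[x]; that is, the ψ-exponential exp_ψ{x K_ψ} = Σ_{k ∈ Z_n} x^k K_ψ^k / k_ψ! equals the matrix with entries x^{i−j}·C_ψ(i,j). -/
/-- The `n×n` ψ-creation matrix `K_ψ`. -/
noncomputable def psiCreation {K : Type*} [Field K] (φ : ℕ → K) (n : ℕ) :
    Matrix (Fin n) (Fin n) K :=
  Matrix.of fun i j =>
    if (i : ℕ) = (j : ℕ) + 1 then φ ((j : ℕ) + 1) / φ (j : ℕ) else 0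

lemma psiCreation_pow_apply {K : Type*} [Field K]
    (φ : ℕ → K) (hφ : ∀ n, φ n ≠ 0) (n : ℕ) (k : ℕ) (i j : Fin n) :
    (psiCreation φ n ^ k) i j = if (i : ℕ) = (j : ℕ) + k then φ i / φ j else 0 := by
  induction k generalizing i j with
  | zero =>
    simp only [pow_zero, Matrix.one_apply, Nat.add_zero]
    by_cases h : i = j
    · subst h; simp [div_self (hφ _)]
    · rw [if_neg h, if_neg (fun hc => h (Fin.ext hc))]
  | succ k ih =>
    rw [pow_succ, Matrix.mul_apply]
    by_cases hj : (j : ℕ) + 1 < n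
    · rw [Finset.sum_eq_single (⟨(j : ℕ) + 1, hj⟩ : Fin n)]
      · rw [ih]
        simp only [psiCreation, Matrix.of_apply]
        rw [if_pos trivial]
        by_cases hc : (i : ℕ) = (j : ℕ) + 1 + k
        · rw [if_pos hc, if_pos (by omega)]
          field_simp
          rw [mul_comm (φ ((j:ℕ) + 1)) (φ (j:ℕ)), mul_div_mul_right _ _ (hφ _)]
        · rw [if_neg hc, if_neg (by omega), zero_mul]
      · intro m _ hm
        simp only [psiCreation, Matrix.of_apply]
        rw [if_neg, mul_zero]
        intro hc
        exact hm (Fin.ext hc)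
      · intro h; exact absurd (Finset.mem_univ _) h
    · have : ∀ m : Fin n, (psiCreation φ n ^ k) i m * psiCreation φ n m j = 0 := by
        intro m
        simp only [psiCreation, Matrix.of_apply]
        rw [if_neg (by omega), mul_zero]
      rw [Finset.sum_congr rfl (fun m _ => this m), Finset.sum_const_zero]
      rw [if_neg (by omega)]

/-- ψ-exponential formula for the ψ-Pascal matrix:
`exp_ψ{x K_ψ} = Σ_{k=0}^{n−1} (x^k/φ(k))·K_ψ^k = P_ψ[x]` for every `x ∈ K`. -/
theorem psiExp_creation_eq_psiPascal {K : Type*} [Field K] [CharZero K]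
    (φ : ℕ → K) (h0 : φ 0 = 1) (hφ : ∀ n, φ n ≠ 0) (n : ℕ) :
    ∀ x : K,
      ∑ k ∈ Finset.range n, (x ^ k / φ k) • psiCreation φ n ^ k = psiPascal φ n x := by
  intro x
  ext i j
  simp only [Matrix.sum_apply, Matrix.smul_apply, psiCreation_pow_apply φ hφ,
    smul_eq_mul, mul_ite, mul_zero, psiPascal, Matrix.of_apply]
  by_cases hij : (j : ℕ) ≤ (i : ℕ)
  · rw [if_pos hij, Finset.sum_eq_single ((i : ℕ) - (j : ℕ))]
    · rw [if_pos (by omega)]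
      unfold psiBinom
      field_simp
    · intro k _ hk
      rw [if_neg (by omega)]
    · intro h
      exact absurd (Finset.mem_range.mpr (by omega)) h
  · rw [if_neg hij, Finset.sum_eq_zero]
    intro k _
    rw [if_neg (by omega)]
end

section
/- ψ-difference equation for the ψ-Pascal matrix: ∂_ψ P_ψ[x] = K_ψ · P_ψ[x], i.e. the n×n matrix whose (i,j)-entry is (i−j)_ψ·x^{i−j−1}·C_ψ(i,j) for 0 ≤ j < i ≤ n−1 and 0 otherwise (the entrywise ψ-derivative in x, where ∂_ψ x^m = m_ψ x^{m−1}) equals the matrix product K_ψ · P_ψ[x], for every x ∈ K. -/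
/-- The ψ-number `m_ψ = φ(m)/φ(m−1)` (for `m ≥ 1`). -/
noncomputable def psiNum {K : Type*} [Field K] (φ : ℕ → K) (m : ℕ) : K :=
  φ m / φ (m - 1)

/-- ψ-difference equation for the ψ-Pascal matrix: the entrywise ψ-derivative of
`P_ψ[x]` in `x` (with `(i,j)` entry `(i−j)_ψ·x^{i−j−1}·C_ψ(i,j)` for `j < i` and `0`
otherwise) equals `K_ψ · P_ψ[x]` for every `x ∈ K`. -/
theorem psiDeriv_psiPascal_eq_creation_mul {K : Type*} [Field K] [CharZero K]
    (φ : ℕ → K) (h0 : φ 0 = 1) (hφ : ∀ n, φ n ≠ 0) (n : ℕ) :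
    ∀ x : K,
      (Matrix.of fun i j : Fin n =>
          if (j : ℕ) < (i : ℕ) then
            psiNum φ ((i : ℕ) - (j : ℕ)) * x ^ ((i : ℕ) - (j : ℕ) - 1) * psiBinom φ i j
          else 0) =
        psiCreation φ n * psiPascal φ n x := by
  intro x
  ext i j
  simp only [Matrix.of_apply, Matrix.mul_apply, psiCreation, psiPascal, psiBinom, psiNum]
  rcases Nat.eq_zero_or_pos (i : ℕ) with hi | hi
  · rw [Finset.sum_eq_zero]
    · simp [hi]
    · intro k _
      rw [if_neg (by omega), zero_mul]
  · have hi' : (i : ℕ) - 1 < n := lt_of_le_of_lt (Nat.sub_le _ _) i.isLt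
    rw [Finset.sum_eq_single (⟨(i : ℕ) - 1, hi'⟩ : Fin n)]
    · simp only
      by_cases hj : (j : ℕ) < (i : ℕ)
      · rw [if_pos hj, if_pos (by omega : (i : ℕ) = (i : ℕ) - 1 + 1),
          if_pos (by omega : (j : ℕ) ≤ (i : ℕ) - 1)]
        have h1 : (i : ℕ) - 1 + 1 = (i : ℕ) := by omega
        have h2 : (i : ℕ) - 1 - (j : ℕ) = (i : ℕ) - (j : ℕ) - 1 := by omega
        have h3 : (i : ℕ) - ((i : ℕ) - (j : ℕ)) = (j : ℕ) := by omega
        have h4 : (i : ℕ) - 1 - ((i : ℕ) - 1 - (j : ℕ)) = (j : ℕ) := by omega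
        rw [h1, h2]
        have ha := hφ ((i : ℕ) - (j : ℕ))
        have hb := hφ ((i : ℕ) - (j : ℕ) - 1)
        have hc := hφ ((i : ℕ) - 1)
        have hd := hφ (j : ℕ)
        field_simp
      · rw [if_neg hj, if_neg (by omega : ¬ (j : ℕ) ≤ (i : ℕ) - 1), mul_zero]
        
    · intro k _ hk
      rw [if_neg, zero_mul]
      intro h
      apply hk
      apply Fin.ext
      simp only
      omega
    · intro h
      exact absurd (Finset.mem_univ _) h
end

section
/- q-Fermat matrix identity (identity (10) of the paper): for all natural numbers i, j, Σ_{k=0}^{min(i,j)} q^{(i−k)·(j−k)} · C_q(i,k) · C_q(j,k) = C_q(i+j, j); i.e. the entries of the symmetric q-Fermat matrix F_q[1] arise as the indicated q-weighted products of q-Pascal matrix entries. -/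
/-- The q-integer `[m]_q = 1 + q + ⋯ + q^{m−1}` (with `[0]_q = 0`). -/
def qInt {K : Type*} [Field K] (q : K) (m : ℕ) : K :=
  ∑ i ∈ Finset.range m, q ^ i

/-- The q-factorial: `[0]_q! = 1` and `[m]_q! = [m]_q·[m−1]_q!`. -/
def qFact {K : Type*} [Field K] (q : K) : ℕ → K
  | 0 => 1
  | m + 1 => qInt q (m + 1) * qFact q m

/-- The Gaussian (q-binomial) coefficient `C_q(n,k) = [n]_q!/([k]_q!·[n−k]_q!)`. -/
noncomputable def qBinom {K : Type*} [Field K] (q : K) (n k : ℕ) : K :=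
  qFact q n / (qFact q k * qFact q (n - k))

section Gb
variable {K : Type*} [Field K] (q : K)

lemma qInt_add (a b : ℕ) : qInt q (a + b) = qInt q a + q ^ a * qInt q b := by
  simp only [qInt, Finset.sum_range_add, pow_add, Finset.mul_sum]

lemma qInt_one' : qInt q 1 = 1 := by simp [qInt]

/-- Recursive Gaussian binomial. -/
def gb (q : K) : ℕ → ℕ → K
  | _, 0 => 1
  | 0, _ + 1 => 0
  | n + 1, k + 1 => gb q n k + q ^ (k + 1) * gb q n (k + 1)

@[simp] lemma gb_zero (n : ℕ) : gb q n 0 = 1 := by cases n <;> rfl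

lemma gb_succ_succ (n k : ℕ) :
    gb q (n + 1) (k + 1) = gb q n k + q ^ (k + 1) * gb q n (k + 1) := rfl

lemma gb_eq_zero : ∀ (n k : ℕ), n < k → gb q n k = 0
  | 0, _ + 1, _ => rfl
  | n + 1, k + 1, h => by
      rw [gb_succ_succ, gb_eq_zero n k (by omega), gb_eq_zero n (k + 1) (by omega)]
      ring

@[simp] lemma gb_self : ∀ n : ℕ, gb q n n = 1
  | 0 => rfl
  | n + 1 => by
      rw [gb_succ_succ, gb_self n, gb_eq_zero q n (n + 1) (by omega)]
      ring

lemma gb_one : ∀ n : ℕ, gb q n 1 = qInt q n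
  | 0 => by simp [qInt, gb]
  | n + 1 => by
      have h1 : gb q (n + 1) 1 = 1 + q * gb q n 1 := by
        rw [show (1 : ℕ) = 0 + 1 from rfl, gb_succ_succ]; simp [pow_one]
      rw [h1, gb_one n, show n + 1 = 1 + n from by omega, qInt_add, qInt_one', pow_one]

lemma gb_succ' : ∀ n k : ℕ, k ≤ n →
    gb q (n + 1) (k + 1) = q ^ (n - k) * gb q n k + gb q n (k + 1)
  | 0, 0, _ => by
      simp [gb_succ_succ, gb_eq_zero q 0 1 (by omega)]
  | n + 1, 0, _ => by
      have h1 : gb q (n + 2) 1 = 1 + q * gb q (n + 1) 1 := by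
        rw [show (1 : ℕ) = 0 + 1 from rfl, gb_succ_succ]; simp [pow_one]
      have h2 := qInt_add q 1 (n + 1)
      have h3 := qInt_add q (n + 1) 1
      simp only [qInt_one', pow_one, mul_one] at h2 h3
      rw [show 1 + (n + 1) = n + 1 + 1 from by omega] at h2
      rw [h1, gb_one, gb_zero, Nat.sub_zero, mul_one]
      linear_combination h3 - h2
  | n + 1, k + 1, h => by
      rcases eq_or_lt_of_le h with heq | hlt
      · have hkn : k = n := by omega
        subst hkn
        rw [gb_succ_succ, gb_self, gb_eq_zero q (k + 1) (k + 1 + 1) (by omega),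
          Nat.sub_self, pow_zero]
        ring
      · have hk : k ≤ n := by omega
        have hk1 : k + 1 ≤ n := by omega
        have H1 := gb_succ_succ q (n + 1) (k + 1)
        have H2 := gb_succ' n k hk
        have H3 := gb_succ' n (k + 1) hk1
        have H4 := gb_succ_succ q n k
        have H5 := gb_succ_succ q n (k + 1)
        have E : q ^ (k + 1 + 1) * q ^ (n - (k + 1)) = q ^ (n - k) * q ^ (k + 1) := by
          rw [← pow_add, ← pow_add]; congr 1; omega
        rw [show n + 1 - (k + 1) = n - k from by omega]
        linear_combination H1 + H2 + q ^ (k + 1 + 1) * H3 - q ^ (n - k) * H4 - H5 +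
          gb q n (k + 1) * E

lemma gb_symm : ∀ n k : ℕ, k ≤ n → gb q n (n - k) = gb q n k
  | 0, 0, _ => rfl
  | n + 1, 0, _ => by simp
  | n + 1, k + 1, h => by
      rcases eq_or_lt_of_le h with heq | hlt
      · have hkn : k = n := by omega
        subst hkn
        simp
      · have hk1 : k + 1 ≤ n := by omega
        have e1 : n + 1 - (k + 1) = (n - (k + 1)) + 1 := by omega
        rw [e1, gb_succ' q n (n - (k + 1)) (by omega),
          show n - (n - (k + 1)) = k + 1 from by omega,
          show n - (k + 1) + 1 = n - k from by omega,
          gb_symm n (k + 1) hk1, gb_symm n k (by omega), gb_succ_succ]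
        ring

end Gb

section Vd
variable {K : Type*} [Field K] (q : K)

lemma gb_vandermonde : ∀ m n k : ℕ,
    gb q (m + n) k =
      ∑ r ∈ Finset.range (k + 1), gb q m r * gb q n (k - r) * q ^ ((m - r) * (k - r))
  | 0, n, k => by
      rw [Finset.sum_eq_single_of_mem 0 (by simp)
        (fun r _ hr => by rw [gb_eq_zero q 0 r (by omega)]; ring)]
      simp
  | m + 1, n, k => by
      cases k with
      | zero => simp
      | succ k =>
        have hR : ∑ r ∈ Finset.range (k + 1 + 1),
            gb q (m + 1) r * gb q n (k + 1 - r) * q ^ ((m + 1 - r) * (k + 1 - r)) =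
            ((∑ r ∈ Finset.range (k + 1),
                gb q m r * gb q n (k - r) * q ^ ((m - r) * (k - r))) +
             ∑ r ∈ Finset.range (k + 1),
                gb q m (r + 1) * gb q n (k - r) * q ^ ((m - r) * (k - r) + (r + 1))) +
            gb q n (k + 1) * q ^ ((m + 1) * (k + 1)) := by
          rw [Finset.sum_range_succ']
          congr 1
          · rw [← Finset.sum_add_distrib]
            refine Finset.sum_congr rfl fun r hr => ?_
            have hr' : r ≤ k := by
              have := Finset.mem_range.mp hr; omega
            rw [show m + 1 - (r + 1) = m - r from by omega,
              show k + 1 - (r + 1) = k - r from by omega, gb_succ_succ, pow_add]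
            ring
          · simp
        have hL2 : q ^ (k + 1) *
            ∑ r ∈ Finset.range (k + 1 + 1),
              gb q m r * gb q n (k + 1 - r) * q ^ ((m - r) * (k + 1 - r)) =
            (∑ r ∈ Finset.range (k + 1),
              gb q m (r + 1) * gb q n (k - r) * q ^ ((m - r) * (k - r) + (r + 1))) +
            gb q n (k + 1) * q ^ ((m + 1) * (k + 1)) := by
          rw [Finset.sum_range_succ', mul_add, Finset.mul_sum]
          congr 1
          · refine Finset.sum_congr rfl fun r hr => ?_
            have hr' : r ≤ k := by
              have := Finset.mem_range.mp hr; omega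
            rw [show k + 1 - (r + 1) = k - r from by omega]
            by_cases hrm : r < m
            · have e : (m - r) * (k - r) + (r + 1) = (k + 1) + (m - (r + 1)) * (k - r) := by
                rw [show m - r = m - (r + 1) + 1 from by omega, add_mul, one_mul]
                generalize (m - (r + 1)) * (k - r) = p
                omega
              rw [e, pow_add]
              ring
            · rw [gb_eq_zero q m (r + 1) (by omega)]
              ring
          · simp only [Nat.sub_zero, gb_zero, one_mul]
            rw [mul_left_comm, ← pow_add]
            congr 1
            ring
        rw [show m + 1 + n = m + n + 1 from by omega, gb_succ_succ,
          gb_vandermonde m n k, gb_vandermonde m n (k + 1), hR]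
        linear_combination hL2

lemma qFact_ne_zero : ∀ n : ℕ, (∀ m : ℕ, 1 ≤ m → m ≤ n → qInt q m ≠ 0) → qFact q n ≠ 0
  | 0, _ => one_ne_zero
  | n + 1, h =>
      mul_ne_zero (h (n + 1) (by omega) le_rfl)
        (qFact_ne_zero n fun m h1 h2 => h m h1 (by omega))

lemma qBinom_eq_gb : ∀ n : ℕ, (∀ m : ℕ, 1 ≤ m → m ≤ n → qInt q m ≠ 0) →
    ∀ k : ℕ, k ≤ n → qBinom q n k = gb q n k
  | 0, _, 0, _ => by norm_num [qBinom, qFact]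
  | n + 1, H, 0, _ => by
      rw [qBinom, Nat.sub_zero, show qFact q 0 = (1 : K) from rfl, one_mul,
        div_self (qFact_ne_zero q (n + 1) H), gb_zero]
  | n + 1, H, k + 1, hk => by
      have Hn : ∀ m : ℕ, 1 ≤ m → m ≤ n → qInt q m ≠ 0 := fun m a b => H m a (by omega)
      rcases eq_or_lt_of_le hk with heq | hlt
      · have hkn : k = n := by omega
        subst hkn
        rw [qBinom, Nat.sub_self, show qFact q 0 = (1 : K) from rfl, mul_one,
          div_self (qFact_ne_zero q (k + 1) H), gb_self]
      · have hk1 : k + 1 ≤ n := by omega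
        have key : qBinom q (n + 1) (k + 1) = qBinom q n k + q ^ (k + 1) * qBinom q n (k + 1) := by
          have ha : qFact q k ≠ 0 := qFact_ne_zero q k fun m h1 h2 => H m h1 (by omega)
          have hb : qFact q (n - k - 1) ≠ 0 :=
            qFact_ne_zero q (n - k - 1) fun m h1 h2 => H m h1 (by omega)
          have hik : qInt q (k + 1) ≠ 0 := H (k + 1) (by omega) (by omega)
          have hink : qInt q (n - k) ≠ 0 := H (n - k) (by omega) (by omega)
          have hin1 : qInt q (n + 1) ≠ 0 := H (n + 1) (by omega) (by omega)
          have e1 : qFact q (n + 1) = qInt q (n + 1) * qFact q n := rfl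
          have e2 : qFact q (k + 1) = qInt q (k + 1) * qFact q k := rfl
          have e3 : qFact q (n - k) = qInt q (n - k) * qFact q (n - k - 1) := by
            rw [show n - k = (n - k - 1) + 1 from by omega]
            rfl
          have e4 : qInt q (n + 1) = qInt q (k + 1) + q ^ (k + 1) * qInt q (n - k) := by
            rw [← qInt_add, show k + 1 + (n - k) = n + 1 from by omega]
          rw [qBinom, qBinom, qBinom, show n + 1 - (k + 1) = n - k from by omega,
            show n - (k + 1) = n - k - 1 from by omega, e1, e2, e4]
          rw [e3]
          field_simp
        rw [key, qBinom_eq_gb n Hn k (by omega), qBinom_eq_gb n Hn (k + 1) hk1, gb_succ_succ]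

end Vd



/-- q-Fermat matrix identity, identity (10) of the paper: for all `i, j`,
`Σ_{k=0}^{min(i,j)} q^{(i−k)(j−k)} · C_q(i,k) · C_q(j,k) = C_q(i+j, j)`. -/
theorem q_fermat_identity {K : Type*} [Field K] (q : K) (i j : ℕ)
    (hq : ∀ m : ℕ, 1 ≤ m → m ≤ i + j → qInt q m ≠ 0) :
    ∑ k ∈ Finset.range (min i j + 1),
        q ^ ((i - k) * (j - k)) * qBinom q i k * qBinom q j k =
      qBinom q (i + j) j := by
  have hqi : ∀ m : ℕ, 1 ≤ m → m ≤ i → qInt q m ≠ 0 := fun m a b => hq m a (by omega)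
  have hqj : ∀ m : ℕ, 1 ≤ m → m ≤ j → qInt q m ≠ 0 := fun m a b => hq m a (by omega)
  have hL : ∑ k ∈ Finset.range (min i j + 1),
      q ^ ((i - k) * (j - k)) * qBinom q i k * qBinom q j k =
      ∑ k ∈ Finset.range (min i j + 1),
        q ^ ((i - k) * (j - k)) * gb q i k * gb q j k := by
    refine Finset.sum_congr rfl fun k hk => ?_
    have hk' := Finset.mem_range.mp hk
    rw [qBinom_eq_gb q i hqi k (by omega), qBinom_eq_gb q j hqj k (by omega)]
  rw [hL, qBinom_eq_gb q (i + j) hq j (by omega), gb_vandermonde q i j j]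
  have hsub : Finset.range (min i j + 1) ⊆ Finset.range (j + 1) :=
    Finset.range_subset_range.mpr (by omega)
  rw [Finset.sum_subset hsub (fun x hx hnx => by
    have h1 := Finset.mem_range.mp hx
    have h2 : ¬ x < min i j + 1 := fun h => hnx (Finset.mem_range.mpr h)
    rw [gb_eq_zero q i x (by omega)]
    ring)]
  refine Finset.sum_congr rfl fun k hk => ?_
  have hk' := Finset.mem_range.mp hk
  rw [gb_symm q j k (by omega)]
  ring
end
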